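/- arXiv:1512.01509 — 4 statements merged into one kernel-verified Lean document; each statement's English description precedes it below -/
import Mathlib

section
/- Let (m_j) be positive integers with A(r) := ∑_j r^{m_j} < ∞ and hence A'(r) < ∞ for all r ∈ (0,1). Then there exists a strictly increasing sequence (r_k) in (0,1) with r_k → 1 such that r_{k+1} − r_k ≤ (1 − r_{k+1})² / A'(r_{k+1}) for all k ≥ 1. -/
/-- If `A(r) = ∑_j r^{m_j} < ∞` and `A'(r) = ∑_j m_j r^{m_j - 1} < ∞` for all
`r ∈ (0,1)`, then there is a strictly increasing sequence `(r_k)` in `(0,1)`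
tending to `1` such that `r_{k+1} - r_k ≤ (1 - r_{k+1})² / A'(r_{k+1})` for all `k`. -/
theorem stmt2 (m : ℕ → ℕ) (hm : ∀ j, 0 < m j)
    (hA : ∀ r : ℝ, r ∈ Set.Ioo (0:ℝ) 1 → Summable (fun j => r ^ m j))
    (hA' : ∀ r : ℝ, r ∈ Set.Ioo (0:ℝ) 1 → Summable (fun j => (m j : ℝ) * r ^ (m j - 1))) :
    ∃ r : ℕ → ℝ, StrictMono r ∧ (∀ k, r k ∈ Set.Ioo (0:ℝ) 1) ∧
      Filter.Tendsto r Filter.atTop (nhds 1) ∧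
      ∀ k : ℕ, r (k + 1) - r k ≤
        (1 - r (k + 1)) ^ 2 / ∑' j, (m j : ℝ) * r (k + 1) ^ (m j - 1) := by
  set A' : ℝ → ℝ := fun s => ∑' j, (m j : ℝ) * s ^ (m j - 1) with hA'def
  have hpos : ∀ s ∈ Set.Ioo (0:ℝ) 1, 0 < A' s := by
    intro s hs
    have hs0 := hs.1
    refine Summable.tsum_pos (hA' s hs) (fun j => ?_) 0 ?_
    · positivity
    · have : (0:ℝ) < (m 0 : ℝ) := by exact_mod_cast hm 0
      have := hs.1
      positivity
  have hmono : ∀ s ∈ Set.Ioo (0:ℝ) 1, ∀ t ∈ Set.Ioo (0:ℝ) 1, s ≤ t → A' s ≤ A' t := by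
    intro s hs t ht hst
    refine Summable.tsum_le_tsum (fun j => ?_) (hA' s hs) (hA' t ht)
    exact mul_le_mul_of_nonneg_left (pow_le_pow_left₀ hs.1.le hst _) (by positivity)
  set φ : ℝ → ℝ := fun s => (1 - s) ^ 2 / A' s with hφdef
  have hφpos : ∀ s ∈ Set.Ioo (0:ℝ) 1, 0 < φ s := by
    intro s hs
    have h1 : (0:ℝ) < (1 - s) ^ 2 := by
      have := hs.2
      have : (0:ℝ) < 1 - s := by linarith
      positivity
    exact div_pos h1 (hpos s hs)
  have hφanti : ∀ s ∈ Set.Ioo (0:ℝ) 1, ∀ t ∈ Set.Ioo (0:ℝ) 1, s ≤ t → φ t ≤ φ s := by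
    intro s hs t ht hst
    refine div_le_div₀ (by positivity) ?_ (hpos s hs) (hmono s hs t ht hst)
    have h1 : (0:ℝ) ≤ 1 - t := by linarith [ht.2]
    have h2 : 1 - t ≤ 1 - s := by linarith
    exact pow_le_pow_left₀ h1 h2 2
  set F : ℝ → ℝ := fun x => x + min ((1 - x) / 2) (φ ((1 + x) / 2)) with hFdef
  set r : ℕ → ℝ := fun k => F^[k] (1/2) with hrdef
  have hmid : ∀ x ∈ Set.Ioo (0:ℝ) 1, (1 + x) / 2 ∈ Set.Ioo (0:ℝ) 1 := by
    intro x hx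
    constructor <;> [linarith [hx.1]; linarith [hx.2]]
  have hFgt : ∀ x ∈ Set.Ioo (0:ℝ) 1, x < F x := by
    intro x hx
    have h1 : (0:ℝ) < (1 - x) / 2 := by linarith [hx.2]
    have h2 := hφpos _ (hmid x hx)
    simp only [hFdef]
    have : 0 < min ((1 - x) / 2) (φ ((1 + x) / 2)) := lt_min h1 h2
    linarith
  have hFle : ∀ x ∈ Set.Ioo (0:ℝ) 1, F x ≤ (1 + x) / 2 := by
    intro x hx
    have : min ((1 - x) / 2) (φ ((1 + x) / 2)) ≤ (1 - x) / 2 := min_le_left _ _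
    simp only [hFdef]; linarith
  have hFmem : ∀ x ∈ Set.Ioo (0:ℝ) 1, F x ∈ Set.Ioo (0:ℝ) 1 := by
    intro x hx
    refine ⟨lt_trans hx.1 (hFgt x hx), lt_of_le_of_lt (hFle x hx) ?_⟩
    linarith [hx.2]
  have hrsucc : ∀ k, r (k + 1) = F (r k) := by
    intro k
    simp only [hrdef, Function.iterate_succ_apply']
  have hrmem : ∀ k, r k ∈ Set.Ioo (0:ℝ) 1 := by
    intro k
    induction k with
    | zero => exact ⟨by norm_num [hrdef], by norm_num [hrdef]⟩
    | succ n ih => rw [hrsucc]; exact hFmem _ ih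
  have hrlt : ∀ k, r k < r (k + 1) := fun k => by
    rw [hrsucc]; exact hFgt _ (hrmem k)
  have hsm : StrictMono r := strictMono_nat_of_lt_succ hrlt
  refine ⟨r, hsm, hrmem, ?_, ?_⟩
  · -- tendsto 1
    have hbdd : BddAbove (Set.range r) := ⟨1, by rintro _ ⟨k, rfl⟩; exact (hrmem k).2.le⟩
    have hten := tendsto_atTop_ciSup hsm.monotone hbdd
    set L := ⨆ k, r k with hL
    have hLle : L ≤ 1 := ciSup_le fun k => (hrmem k).2.le
    have hrleL : ∀ k, r k ≤ L := fun k => le_ciSup hbdd k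
    have hL0 : (1:ℝ)/2 ≤ L := by
      have := hrleL 0; simpa [hrdef] using this
    rcases eq_or_lt_of_le hLle with h1 | h1
    · rwa [h1] at hten
    · exfalso
      have hLmem : L ∈ Set.Ioo (0:ℝ) 1 := ⟨by linarith, h1⟩
      set c : ℝ := min ((1 - L) / 2) (φ ((1 + L) / 2)) with hc
      have hcpos : 0 < c := lt_min (by linarith) (hφpos _ (hmid L hLmem))
      have hstep : ∀ k, r k + c ≤ r (k + 1) := by
        intro k
        rw [hrsucc]
        have hk := hrmem k
        have hkL := hrleL k
        have hmk := hmid _ hk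
        have hmL := hmid _ hLmem
        have h2 : φ ((1 + L) / 2) ≤ φ ((1 + r k) / 2) :=
          hφanti _ hmk _ hmL (by linarith)
        have : c ≤ min ((1 - r k) / 2) (φ ((1 + r k) / 2)) := by
          apply le_min
          · exact le_trans (min_le_left _ _) (by linarith)
          · exact le_trans (min_le_right _ _) h2
        simp only [hFdef]; linarith
      have hgrow : ∀ k, r 0 + k * c ≤ r k := by
        intro k
        induction k with
        | zero => simp
        | succ n ih =>
          have := hstep n
          push_cast
          linarith
      obtain ⟨k, hk⟩ := Archimedean.arch (1:ℝ) hcpos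
      have hk' : (1:ℝ) ≤ k * c := by
        simpa [nsmul_eq_mul] using hk
      have := hgrow k
      have h0 : r 0 = 1/2 := by simp [hrdef]
      have := (hrmem k).2
      linarith
  · -- the gap inequality
    intro k
    have hk1 := hrmem (k + 1)
    have hk := hrmem k
    have hgap : r (k + 1) - r k ≤ φ ((1 + r k) / 2) := by
      rw [hrsucc]
      simp only [hFdef]
      have := min_le_right ((1 - r k) / 2) (φ ((1 + r k) / 2))
      linarith
    have hle : r (k + 1) ≤ (1 + r k) / 2 := by
      rw [hrsucc]; exact hFle _ hk
    have := hφanti _ hk1 _ (hmid _ hk) hle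
    calc r (k + 1) - r k ≤ φ ((1 + r k) / 2) := hgap
      _ ≤ φ (r (k + 1)) := this
      _ = (1 - r (k + 1)) ^ 2 / ∑' j, (m j : ℝ) * r (k + 1) ^ (m j - 1) := rfl
end

section
/- Fix the sequence r_k = 1 − k^{−1/3}. There is a constant C < ∞ such that for all k ≥ 1, all r ∈ (r_k, r_{k+1}), and every sequence of angles θ = (θ_n) with θ_n ∈ ℝ: ∏_n [(1−r^{2n})/(1−r_k^{2n})] · ∏_n [(1 − 2r_k^n cos θ_n + r_k^{2n})/(1 − 2r^n cos θ_n + r^{2n})] ≤ C. -/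
open Finset

/- ### Auxiliary lemmas -/

private lemma aux_tprod_le {f : ℕ → ℝ} {C : ℝ} (hC : 1 ≤ C)
    (h : ∀ N : ℕ, ∏ n ∈ Finset.range N, f n ≤ C) : ∏' n, f n ≤ C := by
  by_cases hf : Multipliable f
  · exact le_of_tendsto' hf.hasProd.tendsto_prod_nat h
  · rw [tprod_eq_one_of_not_multipliable hf]; exact hC

private lemma aux_tprod_nonneg {f : ℕ → ℝ} (h : ∀ n, 0 ≤ f n) : 0 ≤ ∏' n, f n := by
  by_cases hf : Multipliable f
  · exact ge_of_tendsto' hf.hasProd (fun s => Finset.prod_nonneg fun i _ => h i)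
  · rw [tprod_eq_one_of_not_multipliable hf]; norm_num

private lemma aux_ratio {ρ1 ρ2 c : ℝ} (h1 : 0 ≤ ρ1) (h12 : ρ1 ≤ ρ2) (hc : c ≤ 1)
    (h2 : ρ2 ≤ 1) :
    (1 - 2*ρ1*c + ρ1^2) * (1-ρ2)^2 ≤ (1-ρ1)^2 * (1 - 2*ρ2*c + ρ2^2) := by
  nlinarith [mul_nonneg (mul_nonneg (sub_nonneg.2 hc) (sub_nonneg.2 h12))
    (sub_nonneg.2 (by nlinarith : ρ1*ρ2 ≤ 1)), sq_nonneg (ρ1-ρ2), sq_nonneg c]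

private lemma aux_geom_deriv_sum (x : ℝ) (N : ℕ) :
    (1-x)^2 * ∑ n ∈ range N, (n+1 : ℝ) * x^n = 1 - (N+1)*x^N + N*x^(N+1) := by
  induction N with
  | zero => simp
  | succ N ih =>
    rw [Finset.sum_range_succ, mul_add, ih]
    push_cast
    ring

private lemma aux_geom_deriv_le {x : ℝ} (h0 : 0 ≤ x) (h1 : x < 1) (N : ℕ) :
    ∑ n ∈ range N, (n+1 : ℝ) * x^n ≤ 1/(1-x)^2 := by
  rw [le_div_iff₀ (pow_pos (by linarith : (0:ℝ) < 1 - x) 2), mul_comm, aux_geom_deriv_sum]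
  have hx : (N:ℝ)*x^(N+1) ≤ (N+1)*x^N := by
    have h : x^(N+1) ≤ x^N := pow_le_pow_of_le_one h0 h1.le (by omega)
    nlinarith [pow_nonneg h0 N, pow_nonneg h0 (N+1)]
  linarith

private lemma aux_pow_sub_pow_le {q r Δ : ℝ} (hq : 0 ≤ q) (hqr : q ≤ r) (hΔ : r - q ≤ Δ)
    (n : ℕ) : r^(n+1) - q^(n+1) ≤ (n+1) * r^n * Δ := by
  induction n with
  | zero => simpa using hΔ
  | succ n ih =>
    have hr0 : 0 ≤ r := hq.trans hqr
    have h2 : q^(n+1) ≤ r^(n+1) := pow_le_pow_left₀ hq hqr _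
    have h3 : r*(r^(n+1) - q^(n+1)) ≤ r * ((n+1) * r^n * Δ) :=
      mul_le_mul_of_nonneg_left ih hr0
    have hΔ0 : 0 ≤ Δ := le_trans (by linarith) hΔ
    have h4 : q^(n+1)*(r-q) ≤ r^(n+1)*Δ :=
      mul_le_mul h2 hΔ (by linarith) (pow_nonneg hr0 _)
    have h5 : r * ((n+1) * r^n * Δ) = (n+1) * r^(n+1) * Δ := by ring
    calc r^(n+1+1) - q^(n+1+1) = r*(r^(n+1) - q^(n+1)) + q^(n+1)*(r-q) := by ring
    _ ≤ (n+1) * r^(n+1) * Δ + r^(n+1)*Δ := by rw [← h5]; linarith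
    _ = (↑(n+1)+1) * r^(n+1) * Δ := by push_cast; ring

private lemma aux_cube_eps {x : ℝ} (hx : 1 ≤ x) : (x ^ (-(1/3) : ℝ))^3 = x⁻¹ := by
  have h0 : (0:ℝ) ≤ x := by linarith
  rw [← Real.rpow_natCast (x ^ (-(1/3) : ℝ)) 3, ← Real.rpow_mul h0]
  norm_num [Real.rpow_neg_one]

private lemma aux_eps_sub_delta {k : ℕ} (hk : 1 ≤ k) :
    (k:ℝ)^(-(1/3):ℝ) - ((k:ℝ)+1)^(-(1/3):ℝ) ≤ ((k:ℝ)^(-(1/3):ℝ))^4 := by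
  have hk1 : (1:ℝ) ≤ (k:ℝ) := by exact_mod_cast hk
  set ε := (k:ℝ)^(-(1/3):ℝ) with hε
  set δ := ((k:ℝ)+1)^(-(1/3):ℝ) with hδ
  have hε0 : 0 < ε := Real.rpow_pos_of_pos (by linarith) _
  have hδ0 : 0 < δ := Real.rpow_pos_of_pos (by linarith) _
  have hε3 : ε^3 = (k:ℝ)⁻¹ := aux_cube_eps hk1
  have hδ3 : δ^3 = ((k:ℝ)+1)⁻¹ := aux_cube_eps (by linarith)
  have hε4 : ε^4 = ε * (k:ℝ)⁻¹ := by rw [← hε3]; ring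
  have key : ε - ε^4 ≤ δ := by
    rcases le_or_gt (ε - ε^4) 0 with h | h
    · linarith
    · apply le_of_pow_le_pow_left₀ (n := 3) (by norm_num) hδ0.le
      have hkpos : (0:ℝ) < k := by linarith
      have expand : (ε - ε^4)^3 = ε^3 * (1 - (k:ℝ)⁻¹)^3 := by rw [hε4]; ring
      rw [expand, hε3, hδ3]
      have h : (1 - (k:ℝ)⁻¹) = ((k:ℝ)-1)/(k:ℝ) := by field_simp
      rw [h, div_pow, inv_mul_eq_div, div_div, inv_eq_one_div ((k:ℝ)+1),
        div_le_div_iff₀ (by positivity) (by positivity)]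
      have h1 : (k:ℝ) ≤ (k:ℝ)^3 := by
        calc (k:ℝ) = (k:ℝ)^1 := (pow_one _).symm
        _ ≤ (k:ℝ)^3 := pow_le_pow_right₀ hk1 (by norm_num)
      calc ((k:ℝ)-1)^3 * ((k:ℝ)+1) ≤ (k:ℝ)^4 := by nlinarith [h1]
      _ = 1 * ((k:ℝ)^3 * (k:ℝ)) := by ring
  linarith

set_option maxHeartbeats 1000000 in
/-- With `r_k = 1 - k^{-1/3}`, there is a constant `C` such that for all `k ≥ 1`,
all `r ∈ (r_k, r_{k+1})` and all angle sequences `θ`,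
`∏_n (1-r^{2n})/(1-r_k^{2n}) · ∏_n (1-2r_k^n cos θ_n + r_k^{2n})/(1-2r^n cos θ_n + r^{2n}) ≤ C`. -/
theorem stmt3 :
    ∃ C : ℝ, ∀ k : ℕ, 1 ≤ k →
      ∀ r : ℝ,
        r ∈ Set.Ioo (1 - (k : ℝ) ^ (-(1/3) : ℝ)) (1 - ((k : ℝ) + 1) ^ (-(1/3) : ℝ)) →
      ∀ θ : ℕ → ℝ,
        (∏' n : ℕ, (1 - r ^ (2 * (n + 1))) /
            (1 - (1 - (k : ℝ) ^ (-(1/3) : ℝ)) ^ (2 * (n + 1)))) *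
        (∏' n : ℕ,
            (1 - 2 * (1 - (k : ℝ) ^ (-(1/3) : ℝ)) ^ (n + 1) * Real.cos (θ n)
                + (1 - (k : ℝ) ^ (-(1/3) : ℝ)) ^ (2 * (n + 1))) /
            (1 - 2 * r ^ (n + 1) * Real.cos (θ n) + r ^ (2 * (n + 1)))) ≤ C := by
  refine ⟨Real.exp 4, fun k hk r hr θ => ?_⟩
  obtain ⟨hr1, hr2⟩ := hr
  have hk1 : (1:ℝ) ≤ (k:ℝ) := by exact_mod_cast hk
  have hkpos : (0:ℝ) < (k:ℝ) := by linarith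
  set ε := (k:ℝ)^(-(1/3):ℝ) with hεdef
  set δ := ((k:ℝ)+1)^(-(1/3):ℝ) with hδdef
  set q := 1 - ε with hqdef
  have hε0 : 0 < ε := Real.rpow_pos_of_pos (by linarith) _
  have hδ0 : 0 < δ := Real.rpow_pos_of_pos (by linarith) _
  have hε1 : ε ≤ 1 := Real.rpow_le_one_of_one_le_of_nonpos hk1 (by norm_num)
  have hε3 : ε^3 = (k:ℝ)⁻¹ := aux_cube_eps hk1
  have hδ3 : δ^3 = ((k:ℝ)+1)⁻¹ := aux_cube_eps (by linarith)
  have hq0 : 0 ≤ q := by simp only [hqdef]; linarith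
  have hq1 : q < 1 := by simp only [hqdef]; linarith
  have hqr : q < r := hr1
  have hr0 : 0 ≤ r := le_of_lt (lt_of_le_of_lt hq0 hqr)
  have hrlt1 : r < 1 := by linarith
  have hδr : δ ≤ 1 - r := by linarith
  have hΔ : r - q ≤ ε^4 := by
    have h1 : ε - δ ≤ ε^4 := aux_eps_sub_delta hk
    have h2 : r - q ≤ ε - δ := by simp only [hqdef]; linarith
    linarith
  -- the second product's factor bound
  set u : ℕ → ℝ := fun n => (r^(n+1) - q^(n+1))/(1 - r^(n+1)) with hudef
  have hpowr : ∀ n : ℕ, r^(n+1) ≤ r := fun n => by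
    calc r^(n+1) ≤ r^1 := pow_le_pow_of_le_one hr0 hrlt1.le (by omega)
    _ = r := pow_one r
  have hden : ∀ n : ℕ, δ ≤ 1 - r^(n+1) := fun n => by
    have := hpowr n; linarith
  have hρ12 : ∀ n : ℕ, q^(n+1) ≤ r^(n+1) := fun n => pow_le_pow_left₀ hq0 hqr.le _
  have hu0 : ∀ n : ℕ, 0 ≤ u n := fun n =>
    div_nonneg (by have := hρ12 n; linarith) (by have := hden n; linarith)
  -- sum of u over any range is at most 2
  have hsum : ∀ N : ℕ, ∑ n ∈ range N, u n ≤ 2 := by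
    intro N
    have huble : ∀ n ∈ range N, u n ≤ ((n:ℝ)+1) * r^n * ((r-q)/δ) := by
      intro n _
      have h1 : r^(n+1) - q^(n+1) ≤ ((n:ℝ)+1) * r^n * (r-q) :=
        aux_pow_sub_pow_le hq0 hqr.le le_rfl n
      have h2 : δ ≤ 1 - r^(n+1) := hden n
      calc u n ≤ (((n:ℝ)+1) * r^n * (r-q))/δ := by
            rw [hudef]
            exact div_le_div₀ (mul_nonneg (by positivity) (by linarith)) h1 hδ0 h2
      _ = ((n:ℝ)+1) * r^n * ((r-q)/δ) := by ring
    have hrq0 : 0 ≤ (r-q)/δ := div_nonneg (by linarith) hδ0.le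
    calc ∑ n ∈ range N, u n ≤ ∑ n ∈ range N, ((n:ℝ)+1) * r^n * ((r-q)/δ) :=
          Finset.sum_le_sum huble
    _ = (∑ n ∈ range N, ((n:ℝ)+1) * r^n) * ((r-q)/δ) := by rw [← Finset.sum_mul]
    _ ≤ (1/(1-r)^2) * ((r-q)/δ) :=
          mul_le_mul_of_nonneg_right (aux_geom_deriv_le hr0 hrlt1 N) hrq0
    _ ≤ (1/δ^2) * ((r-q)/δ) := by
          apply mul_le_mul_of_nonneg_right _ hrq0
          apply one_div_le_one_div_of_le (by positivity)
          exact pow_le_pow_left₀ hδ0.le hδr 2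
    _ = (r-q) * (δ^3)⁻¹ := by ring
    _ = (r-q) * ((k:ℝ)+1) := by rw [hδ3, inv_inv]
    _ ≤ ε^4 * ((k:ℝ)+1) := mul_le_mul_of_nonneg_right hΔ (by linarith)
    _ = ε * (((k:ℝ)+1) * (k:ℝ)⁻¹) := by rw [← hε3]; ring
    _ ≤ 1 * 2 := by
          apply mul_le_mul hε1 _ (by positivity) (by norm_num)
          rw [mul_inv_le_iff₀ hkpos]
          linarith
    _ = 2 := by norm_num
  -- bound the second product
  set f : ℕ → ℝ := fun n =>
    (1 - 2 * q ^ (n + 1) * Real.cos (θ n) + q ^ (2 * (n + 1))) /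
      (1 - 2 * r ^ (n + 1) * Real.cos (θ n) + r ^ (2 * (n + 1))) with hfdef
  have hsq : ∀ (x : ℝ) (n : ℕ), x ^ (2*(n+1)) = (x^(n+1))^2 := by
    intro x n
    rw [mul_comm 2 (n+1), pow_mul]
  have hcos1 : ∀ n, Real.cos (θ n) ≤ 1 := fun n => Real.cos_le_one _
  have hcos2 : ∀ n, -1 ≤ Real.cos (θ n) := fun n => Real.neg_one_le_cos _
  have hPrpos : ∀ n : ℕ, 0 < 1 - 2 * r ^ (n + 1) * Real.cos (θ n) + r ^ (2 * (n + 1)) := by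
    intro n
    rw [hsq]
    have h1 : r^(n+1) ≤ r := hpowr n
    have h2 : 0 ≤ r^(n+1) := pow_nonneg hr0 _
    nlinarith [hcos1 n, hcos2 n, sq_nonneg (1 - r^(n+1))]
  have hPqnn : ∀ n : ℕ, 0 ≤ 1 - 2 * q ^ (n + 1) * Real.cos (θ n) + q ^ (2 * (n + 1)) := by
    intro n
    rw [hsq]
    have h2 : 0 ≤ q^(n+1) := pow_nonneg hq0 _
    have h3 : q^(n+1) ≤ 1 := pow_le_one₀ hq0 hq1.le
    nlinarith [hcos1 n, hcos2 n, sq_nonneg (1 - q^(n+1))]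
  have hf0 : ∀ n, 0 ≤ f n := fun n => div_nonneg (hPqnn n) (hPrpos n).le
  have hfle : ∀ n, f n ≤ Real.exp (2 * u n) := by
    intro n
    have hρ2le1 : r^(n+1) ≤ 1 := pow_le_one₀ hr0 hrlt1.le
    have hρ2lt1 : r^(n+1) < 1 := by
      have := hpowr n; linarith
    have hρ1 : 0 ≤ q^(n+1) := pow_nonneg hq0 _
    have hB : (0:ℝ) < (1 - r^(n+1))^2 := pow_pos (by linarith) 2
    have step1 : f n ≤ (1 - q^(n+1))^2 / (1 - r^(n+1))^2 := by
      rw [hfdef]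
      simp only []
      rw [div_le_div_iff₀ (hPrpos n) hB, hsq, hsq]
      have := aux_ratio (ρ1 := q^(n+1)) (ρ2 := r^(n+1)) (c := Real.cos (θ n))
        hρ1 (hρ12 n) (hcos1 n) hρ2le1
      nlinarith [this]
    have step2 : (1 - q^(n+1))/(1 - r^(n+1)) = 1 + u n := by
      rw [hudef]
      have hne : (1:ℝ) - r^(n+1) ≠ 0 := by linarith
      field_simp
      ring
    have step3 : (1 - q^(n+1))^2 / (1 - r^(n+1))^2 = (1 + u n)^2 := by
      rw [← div_pow, step2]
    have step4 : (1 + u n)^2 ≤ Real.exp (2 * u n) := by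
      have h1 : 1 + u n ≤ Real.exp (u n) := by
        have := Real.add_one_le_exp (u n)
        linarith
      have h2 : 0 ≤ 1 + u n := by have := hu0 n; linarith
      calc (1 + u n)^2 ≤ (Real.exp (u n))^2 := pow_le_pow_left₀ h2 h1 2
      _ = Real.exp (2 * u n) := by rw [sq, ← Real.exp_add, two_mul]
    calc f n ≤ (1 - q^(n+1))^2 / (1 - r^(n+1))^2 := step1
    _ = (1 + u n)^2 := step3
    _ ≤ Real.exp (2 * u n) := step4
  have hBprod : (∏' n : ℕ, f n) ≤ Real.exp 4 := by
    apply aux_tprod_le (Real.one_le_exp (by norm_num))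
    intro N
    calc ∏ n ∈ range N, f n ≤ ∏ n ∈ range N, Real.exp (2 * u n) :=
          Finset.prod_le_prod (fun i _ => hf0 i) (fun i _ => hfle i)
    _ = Real.exp (∑ n ∈ range N, 2 * u n) := (Real.exp_sum _ _).symm
    _ ≤ Real.exp 4 := by
          apply Real.exp_le_exp.2
          rw [← Finset.mul_sum]
          have := hsum N
          linarith
  have hB0 : 0 ≤ ∏' n : ℕ, f n := aux_tprod_nonneg hf0
  -- bound the first product
  set g : ℕ → ℝ := fun n => (1 - r ^ (2 * (n + 1))) / (1 - q ^ (2 * (n + 1))) with hgdef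
  have hgden : ∀ n : ℕ, 0 < 1 - q ^ (2*(n+1)) := by
    intro n
    have : q ^ (2*(n+1)) < 1 := pow_lt_one₀ hq0 hq1 (by omega)
    linarith
  have hg0 : ∀ n, 0 ≤ g n := by
    intro n
    apply div_nonneg _ (hgden n).le
    have : r ^ (2*(n+1)) ≤ 1 := pow_le_one₀ hr0 hrlt1.le
    linarith
  have hg1 : ∀ n, g n ≤ 1 := by
    intro n
    rw [hgdef]
    simp only []
    rw [div_le_one (hgden n)]
    have : q ^ (2*(n+1)) ≤ r ^ (2*(n+1)) := pow_le_pow_left₀ hq0 hqr.le _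
    linarith
  have hA1 : (∏' n : ℕ, g n) ≤ 1 := by
    apply aux_tprod_le le_rfl
    intro N
    exact Finset.prod_le_one (fun i _ => hg0 i) (fun i _ => hg1 i)
  calc (∏' n : ℕ, g n) * (∏' n : ℕ, f n) ≤ 1 * (∏' n : ℕ, f n) :=
        mul_le_mul_of_nonneg_right hA1 hB0
  _ = ∏' n : ℕ, f n := one_mul _
  _ ≤ Real.exp 4 := hBprod
end

section
/- For 0 < r_k < r < r_{k+1} < 1, any n ≥ 1 and any angle θ_n: |(1 − 2r_k^n cos θ_n + r_k^{2n})/(1 − 2r^n cos θ_n + r^{2n}) − 1| ≤ 4n(r_{k+1}−r_k) r_{k+1}^{n−1}/(1−r_{k+1})². -/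
/-- `b^(m+1) - a^(m+1) ≤ (m+1)*(b-a)*b^m` for `0 ≤ a ≤ b`. -/
lemma aux_pow_sub (a b : ℝ) (ha : 0 ≤ a) (hab : a ≤ b) :
    ∀ m : ℕ, b ^ (m + 1) - a ^ (m + 1) ≤ (m + 1) * (b - a) * b ^ m := by
  intro m
  induction m with
  | zero => simp
  | succ m ih =>
    have hb : 0 ≤ b := ha.trans hab
    have hapow : a ^ (m + 1) ≤ b ^ (m + 1) := pow_le_pow_left₀ ha hab _
    push_cast
    calc b ^ (m + 1 + 1) - a ^ (m + 1 + 1)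
        = b * (b ^ (m + 1) - a ^ (m + 1)) + a ^ (m + 1) * (b - a) := by ring
      _ ≤ b * (((m : ℝ) + 1) * (b - a) * b ^ m) + b ^ (m + 1) * (b - a) :=
          add_le_add (mul_le_mul_of_nonneg_left ih hb)
            (mul_le_mul_of_nonneg_right hapow (sub_nonneg.mpr hab))
      _ = ((m : ℝ) + 1 + 1) * (b - a) * b ^ (m + 1) := by ring

/-- For `0 < r_k < r < r_{k+1} < 1`, `n ≥ 1` and any angle `θ`,
`|(1-2r_k^n cos θ + r_k^{2n})/(1-2r^n cos θ + r^{2n}) - 1|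
  ≤ 4n(r_{k+1}-r_k) r_{k+1}^{n-1}/(1-r_{k+1})²`. -/
theorem stmt5 (rk rk1 r : ℝ) (h0 : 0 < rk) (h1 : rk < r) (h2 : r < rk1) (h3 : rk1 < 1)
    (n : ℕ) (hn : 1 ≤ n) (θ : ℝ) :
    |(1 - 2 * rk ^ n * Real.cos θ + rk ^ (2 * n)) /
        (1 - 2 * r ^ n * Real.cos θ + r ^ (2 * n)) - 1| ≤
      4 * n * (rk1 - rk) * rk1 ^ (n - 1) / (1 - rk1) ^ 2 := by
  obtain ⟨m, rfl⟩ : ∃ m, n = m + 1 := ⟨n - 1, (Nat.succ_pred_eq_of_pos hn).symm⟩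
  have hr0 : (0:ℝ) < r := h0.trans h1
  have hrk10 : (0:ℝ) < rk1 := hr0.trans h2
  set a := rk ^ (m + 1) with ha_def
  set b := r ^ (m + 1) with hb_def
  set c := rk1 ^ (m + 1) with hc_def
  have ha0 : 0 < a := pow_pos h0 _
  have hab : a < b := pow_lt_pow_left₀ h1 h0.le (by omega)
  have hbc : b < c := pow_lt_pow_left₀ h2 hr0.le (by omega)
  have hc1 : c ≤ rk1 := pow_le_of_le_one hrk10.le h3.le (by omega)
  have hcos : Real.cos θ ≤ 1 := Real.cos_le_one θ
  have hcos' : -1 ≤ Real.cos θ := Real.neg_one_le_cos θ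
  have hb1 : b < 1 := (hbc.trans_le hc1).trans h3
  have hD : (1 - rk1) ^ 2 ≤ 1 - 2 * b * Real.cos θ + b ^ 2 := by
    nlinarith [mul_le_mul_of_nonneg_left hcos (mul_pos two_pos (ha0.trans hab)).le]
  have hDsq : (0:ℝ) < (1 - rk1) ^ 2 := pow_pos (by linarith) 2
  have hDpos : (0:ℝ) < 1 - 2 * b * Real.cos θ + b ^ 2 := lt_of_lt_of_le hDsq hD
  have hsq : ∀ x : ℝ, x ^ (2 * (m + 1)) = (x ^ (m + 1)) ^ 2 := fun x => by
    rw [mul_comm, pow_mul]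
  rw [hsq, hsq]
  have hkey : |(1 - 2 * a * Real.cos θ + a ^ 2) / (1 - 2 * b * Real.cos θ + b ^ 2) - 1|
      = |(1 - 2 * a * Real.cos θ + a ^ 2) - (1 - 2 * b * Real.cos θ + b ^ 2)| /
        (1 - 2 * b * Real.cos θ + b ^ 2) := by
    rw [div_sub_one hDpos.ne', abs_div, abs_of_pos hDpos]
  rw [hkey]
  have hnum : |(1 - 2 * a * Real.cos θ + a ^ 2) - (1 - 2 * b * Real.cos θ + b ^ 2)|
      ≤ 4 * (b - a) := by
    rw [abs_le]
    constructor <;> nlinarith [sq_nonneg (a + b), sq_nonneg (a - b), ha0.le, hab.le,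
      mul_le_mul_of_nonneg_left hcos (sub_nonneg.mpr hab.le),
      mul_le_mul_of_nonneg_left hcos' (sub_nonneg.mpr hab.le)]
  have hba : b - a ≤ ((m : ℝ) + 1) * (rk1 - rk) * rk1 ^ m := by
    have h := aux_pow_sub rk rk1 h0.le (h1.trans h2).le m
    have hlt : b - a ≤ c - a := by linarith
    calc b - a ≤ rk1 ^ (m + 1) - rk ^ (m + 1) := hlt
      _ ≤ ((m : ℝ) + 1) * (rk1 - rk) * rk1 ^ m := by push_cast at h ⊢; linarith
  have hstep : |(1 - 2 * a * Real.cos θ + a ^ 2) - (1 - 2 * b * Real.cos θ + b ^ 2)| /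
        (1 - 2 * b * Real.cos θ + b ^ 2)
      ≤ 4 * (b - a) / (1 - rk1) ^ 2 :=
    div_le_div₀ (by linarith) hnum hDsq hD
  refine hstep.trans ?_
  have hm : m + 1 - 1 = m := by omega
  rw [hm]
  have h4 : 4 * (b - a) ≤ 4 * ((m : ℝ) + 1) * (rk1 - rk) * rk1 ^ m := by nlinarith
  refine (div_le_div_iff_of_pos_right hDsq).mpr ?_
  push_cast
  linarith
end

section
/- Let u be the Poisson extension to the unit disc of the boundary function ψ(t/δ), where ψ is a fixed smooth even bump with ψ = 1 on (−1/4,1/4), ψ = 0 off (−1/2,1/2), 0 ≤ ψ ≤ 1, and δ ∈ (0,1). Then the radial maximal function Mu(e^{it}) := sup_{0<r<1} u(re^{it}) satisfies Mu(e^{it}) ≥ c·min(1, δ/|t|) for some absolute constant c > 0 and all t ∈ [−π, π). Consequently ∫_𝕋 Mu dt/(2π) ≥ c' δ log(1/δ). -/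
open MeasureTheory intervalIntegral

noncomputable section

/-- The one-dimensional Poisson kernel `P_r(x) = (1-r²)/(1-2r cos x + r²)`. -/
def poissonK (r x : ℝ) : ℝ := (1 - r ^ 2) / (1 - 2 * r * Real.cos x + r ^ 2)

/-- The Poisson extension to the disc of the boundary function `s ↦ ψ(s/δ)`. -/
def poissonExt (ψ : ℝ → ℝ) (δ r t : ℝ) : ℝ :=
  (1 / (2 * Real.pi)) * ∫ s in (-Real.pi)..Real.pi, poissonK r (t - s) * ψ (s / δ)

lemma denom_pos' {r : ℝ} (hr0 : 0 < r) (hr1 : r < 1) (x : ℝ) :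
    0 < 1 - 2 * r * Real.cos x + r ^ 2 := by
  nlinarith [Real.cos_le_one x, mul_pos (by linarith : (0:ℝ) < 1 - r) (by linarith : (0:ℝ) < 1 - r)]

lemma poissonK_nonneg' {r : ℝ} (hr0 : 0 < r) (hr1 : r < 1) (x : ℝ) :
    0 ≤ poissonK r x := by
  apply div_nonneg (by nlinarith) (denom_pos' hr0 hr1 x).le

lemma poissonK_cont' {r : ℝ} (hr0 : 0 < r) (hr1 : r < 1) (t : ℝ) :
    Continuous fun s => poissonK r (t - s) := by
  unfold poissonK
  exact Continuous.div (by fun_prop) (by fun_prop) (fun s => (denom_pos' hr0 hr1 _).ne')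

lemma cauchy_int_le {a : ℝ} (ha : 0 < a) (b c : ℝ) :
    ∫ x in b..c, a / (a ^ 2 + x ^ 2) ≤ Real.pi := by
  have hderiv : ∀ x ∈ Set.uIcc b c, HasDerivAt (fun y => Real.arctan (y / a))
      (a / (a ^ 2 + x ^ 2)) x := by
    intro x _
    have h1 : HasDerivAt (fun y : ℝ => y / a) (1 / a) x := by
      simpa using (hasDerivAt_id x).div_const a
    have h2 := (Real.hasDerivAt_arctan (x / a)).comp x h1
    refine h2.congr_deriv ?_
    field_simp
  have hint : IntervalIntegrable (fun x => a / (a ^ 2 + x ^ 2)) volume b c := by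
    apply Continuous.intervalIntegrable
    exact Continuous.div continuous_const (by fun_prop) (fun x => by positivity)
  rw [intervalIntegral.integral_eq_sub_of_hasDerivAt hderiv hint]
  have h1 := Real.arctan_lt_pi_div_two (c / a)
  have h2 := Real.neg_pi_div_two_lt_arctan (b / a)
  linarith

lemma poissonK_upper {r : ℝ} (hr0 : 0 < r) (hr1 : r < 1) {x : ℝ}
    (hx : |x| ≤ Real.pi + 1/2) :
    poissonK r x ≤ 3 + Real.pi ^ 2 * ((1 - r) / ((1 - r) ^ 2 + x ^ 2)) := by
  have hπ := Real.pi_gt_three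
  have hD := denom_pos' hr0 hr1 x
  have hcauchy : 0 ≤ (1 - r) / ((1 - r) ^ 2 + x ^ 2) :=
    div_nonneg (by linarith) (by positivity)
  rcases le_or_gt r (1/2) with hr | hr
  · have h3 : poissonK r x ≤ 3 := by
      rw [poissonK, div_le_iff₀ hD]
      nlinarith [Real.cos_le_one x]
    nlinarith
  · rcases le_or_gt |x| Real.pi with hxπ | hxπ
    · set k : ℝ := 2 / Real.pi ^ 2 with hk
      have hπ2 : (0:ℝ) < Real.pi ^ 2 := by positivity
      have hk0 : 0 < k := by positivity
      have hk1 : k ≤ 1 := by rw [hk, div_le_one hπ2]; nlinarith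
      have hkk : Real.pi ^ 2 * k = 2 := by rw [hk]; field_simp
      have hcos : Real.cos x ≤ 1 - k * x ^ 2 := Real.cos_le_one_sub_mul_cos_sq hxπ
      have hs : 0 < (1 - r) ^ 2 + x ^ 2 := by
        nlinarith [sq_nonneg x, mul_pos (by linarith : (0:ℝ) < 1 - r)
          (by linarith : (0:ℝ) < 1 - r)]
      have hden : k * ((1 - r) ^ 2 + x ^ 2) ≤ 1 - 2 * r * Real.cos x + r ^ 2 := by
        nlinarith [mul_le_mul_of_nonneg_left hcos (by linarith : (0:ℝ) ≤ 2 * r),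
          mul_nonneg (mul_nonneg (by linarith : (0:ℝ) ≤ 2 * r - 1) hk0.le) (sq_nonneg x),
          mul_nonneg (mul_nonneg (by linarith : (0:ℝ) ≤ 1 - k) hk0.le) (sq_nonneg (1 - r)),
          mul_le_mul_of_nonneg_left hk1 (sq_nonneg (1 - r))]
      have key : poissonK r x ≤ Real.pi ^ 2 * ((1 - r) / ((1 - r) ^ 2 + x ^ 2)) := by
        rw [poissonK, mul_div_assoc', div_le_div_iff₀ hD hs]
        have h2 := mul_le_mul_of_nonneg_left hden
          (by nlinarith : (0:ℝ) ≤ Real.pi ^ 2 * (1 - r))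
        nlinarith [mul_le_mul_of_nonneg_right
          (by nlinarith [sq_nonneg (1 - r)] : 1 - r ^ 2 ≤ 2 * (1 - r)) hs.le]
      nlinarith
    · have hcos : Real.cos x ≤ 0 := by
        have h0 : Real.cos |x| ≤ 0 :=
          Real.cos_nonpos_of_pi_div_two_le_of_le (by linarith) (by linarith)
        rwa [Real.cos_abs] at h0
      have h3 : poissonK r x ≤ 3 := by
        rw [poissonK, div_le_iff₀ hD]
        nlinarith
      nlinarith

lemma psi_scaled_zero {ψ : ℝ → ℝ} (hsupp : ∀ s : ℝ, (1/2 : ℝ) ≤ |s| → ψ s = 0)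
    {δ : ℝ} (hδ0 : 0 < δ) (hδ1 : δ < 1) {s : ℝ} (hs : (1/2:ℝ) ≤ |s|) :
    ψ (s / δ) = 0 := by
  apply hsupp
  rw [abs_div, abs_of_pos hδ0]
  calc (1/2:ℝ) ≤ |s| := hs
    _ ≤ |s| / δ := by
        rw [le_div_iff₀ hδ0]
        nlinarith [abs_nonneg s]

lemma ext_upper {ψ : ℝ → ℝ} (hψc : Continuous ψ)
    (hsupp : ∀ s : ℝ, (1/2 : ℝ) ≤ |s| → ψ s = 0)
    (hb : ∀ s, 0 ≤ ψ s ∧ ψ s ≤ 1)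
    {δ : ℝ} (hδ0 : 0 < δ) (hδ1 : δ < 1)
    {r : ℝ} (hr0 : 0 < r) (hr1 : r < 1)
    {t : ℝ} (ht : t ∈ Set.Icc (-Real.pi) Real.pi) :
    poissonExt ψ δ r t ≤ (1 / (2 * Real.pi)) * (3 + Real.pi ^ 3) := by
  have hπ := Real.pi_gt_three
  obtain ⟨ht1, ht2⟩ := ht
  set f : ℝ → ℝ := fun s => poissonK r (t - s) * ψ (s / δ) with hf
  have hfc : Continuous f := (poissonK_cont' hr0 hr1 t).mul (hψc.comp (by fun_prop))
  have hint : ∀ a b : ℝ, IntervalIntegrable f volume a b := fun a b =>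
    hfc.intervalIntegrable a b
  set g : ℝ → ℝ := fun s => 3 + Real.pi ^ 2 * ((1 - r) / ((1 - r) ^ 2 + (t - s) ^ 2)) with hg
  have ha : 0 < 1 - r := by linarith
  have hgc : Continuous g := by
    apply continuous_const.add (continuous_const.mul _)
    apply Continuous.div continuous_const (by fun_prop)
    intro s
    nlinarith [sq_nonneg (t - s), mul_pos ha ha]
  have hsplit : (∫ s in (-Real.pi)..Real.pi, f s)
      = (∫ s in (-Real.pi)..(-(1/2)), f s) + ((∫ s in (-(1/2))..(1/2:ℝ), f s)
        + (∫ s in (1/2:ℝ)..Real.pi, f s)) := by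
    rw [integral_add_adjacent_intervals (hint _ _) (hint _ _),
      integral_add_adjacent_intervals (hint _ _) (hint _ _)]
  have hzero1 : (∫ s in (-Real.pi)..(-(1/2)), f s) = 0 := by
    have heq : Set.EqOn f (fun _ => (0:ℝ)) (Set.uIcc (-Real.pi) (-(1/2))) := by
      intro s hs
      rw [Set.uIcc_of_le (by linarith : -Real.pi ≤ -(1/2))] at hs
      have habs : (1/2:ℝ) ≤ |s| := le_abs.mpr (Or.inr (by linarith [hs.2]))
      simp [hf, psi_scaled_zero hsupp hδ0 hδ1 habs]
    rw [intervalIntegral.integral_congr heq]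
    simp
  have hzero2 : (∫ s in (1/2:ℝ)..Real.pi, f s) = 0 := by
    have heq : Set.EqOn f (fun _ => (0:ℝ)) (Set.uIcc (1/2:ℝ) Real.pi) := by
      intro s hs
      rw [Set.uIcc_of_le (by linarith : (1/2:ℝ) ≤ Real.pi)] at hs
      have habs : (1/2:ℝ) ≤ |s| := le_abs.mpr (Or.inl hs.1)
      simp [hf, psi_scaled_zero hsupp hδ0 hδ1 habs]
    rw [intervalIntegral.integral_congr heq]
    simp
  have hmid : (∫ s in (-(1/2))..(1/2:ℝ), f s) ≤ 3 + Real.pi ^ 3 := by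
    have h1 : (∫ s in (-(1/2))..(1/2:ℝ), f s) ≤ ∫ s in (-(1/2))..(1/2:ℝ), g s := by
      apply intervalIntegral.integral_mono_on (by norm_num) (hint _ _)
        (hgc.intervalIntegrable _ _)
      intro s hs
      have hts : |t - s| ≤ Real.pi + 1/2 := by
        rw [abs_le]; constructor <;> [linarith [hs.2]; linarith [hs.1]]
      calc f s ≤ poissonK r (t - s) :=
            mul_le_of_le_one_right (poissonK_nonneg' hr0 hr1 _) (hb _).2
        _ ≤ g s := poissonK_upper hr0 hr1 hts
    have h2 : (∫ s in (-(1/2))..(1/2:ℝ), g s)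
        = 3 + Real.pi ^ 2 * ∫ s in (-(1/2))..(1/2:ℝ), (1 - r) / ((1 - r) ^ 2 + (t - s) ^ 2) := by
      rw [hg]
      rw [intervalIntegral.integral_add intervalIntegrable_const
        (by apply Continuous.intervalIntegrable
            fun_prop (disch := intro s; nlinarith [sq_nonneg (t - s), mul_pos ha ha]))]
      rw [intervalIntegral.integral_const_mul, intervalIntegral.integral_const]
      norm_num
    have h3 : (∫ s in (-(1/2))..(1/2:ℝ), (1 - r) / ((1 - r) ^ 2 + (t - s) ^ 2)) ≤ Real.pi := by
      have hcomp := intervalIntegral.integral_comp_sub_left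
        (a := -(1/2)) (b := (1/2:ℝ)) (fun x => (1 - r) / ((1 - r) ^ 2 + x ^ 2)) t
      rw [hcomp]
      exact cauchy_int_le ha _ _
    have h4 : Real.pi ^ 2 * (∫ s in (-(1/2))..(1/2:ℝ), (1 - r) / ((1 - r) ^ 2 + (t - s) ^ 2))
        ≤ Real.pi ^ 3 := by
      calc Real.pi ^ 2 * _ ≤ Real.pi ^ 2 * Real.pi :=
            mul_le_mul_of_nonneg_left h3 (by positivity)
        _ = Real.pi ^ 3 := by ring
    linarith [h1, h2 ▸ h1]
  have hiπ : (0:ℝ) < 1 / (2 * Real.pi) := by positivity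
  rw [poissonExt]
  apply mul_le_mul_of_nonneg_left _ hiπ.le
  rw [hsplit, hzero1, hzero2]
  linarith

lemma ext_lower {ψ : ℝ → ℝ} (hψc : Continuous ψ)
    (hone : ∀ s ∈ Set.Ioo (-(1/4) : ℝ) (1/4), ψ s = 1)
    (hb : ∀ s, 0 ≤ ψ s ∧ ψ s ≤ 1)
    {δ : ℝ} (hδ0 : 0 < δ) (hδ1 : δ < 1)
    {r : ℝ} (hr0 : 0 < r) (hr1 : r < 1)
    {t L : ℝ}
    (hker : ∀ s ∈ Set.Icc (-(δ/8)) (δ/8), L ≤ poissonK r (t - s)) :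
    (1 / (2 * Real.pi)) * (L * (δ / 4)) ≤ poissonExt ψ δ r t := by
  have hπ := Real.pi_gt_three
  set f : ℝ → ℝ := fun s => poissonK r (t - s) * ψ (s / δ) with hf
  have hfc : Continuous f := (poissonK_cont' hr0 hr1 t).mul (hψc.comp (by fun_prop))
  have hint : ∀ a b : ℝ, IntervalIntegrable f volume a b := fun a b =>
    hfc.intervalIntegrable a b
  have hfnn : ∀ s, 0 ≤ f s := fun s =>
    mul_nonneg (poissonK_nonneg' hr0 hr1 _) (hb _).1
  have hsplit : (∫ s in (-Real.pi)..Real.pi, f s)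
      = (∫ s in (-Real.pi)..(-(δ/8)), f s) + ((∫ s in (-(δ/8))..(δ/8:ℝ), f s)
        + (∫ s in (δ/8:ℝ)..Real.pi, f s)) := by
    rw [integral_add_adjacent_intervals (hint _ _) (hint _ _),
      integral_add_adjacent_intervals (hint _ _) (hint _ _)]
  have hpos1 : 0 ≤ ∫ s in (-Real.pi)..(-(δ/8)), f s :=
    intervalIntegral.integral_nonneg (by linarith) (fun s _ => hfnn s)
  have hpos2 : 0 ≤ ∫ s in (δ/8:ℝ)..Real.pi, f s :=
    intervalIntegral.integral_nonneg (by linarith) (fun s _ => hfnn s)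
  have hmid : L * (δ / 4) ≤ ∫ s in (-(δ/8))..(δ/8:ℝ), f s := by
    have hconst : (∫ _ in (-(δ/8))..(δ/8:ℝ), L) = L * (δ / 4) := by
      rw [intervalIntegral.integral_const, smul_eq_mul]
      ring
    rw [← hconst]
    apply intervalIntegral.integral_mono_on (by linarith) intervalIntegrable_const (hint _ _)
    intro s hs
    have hψ1 : ψ (s / δ) = 1 := by
      apply hone
      constructor
      · rw [neg_lt, ← neg_div]
        rw [div_lt_iff₀ hδ0]
        nlinarith [hs.1]
      · rw [div_lt_iff₀ hδ0]
        nlinarith [hs.2]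
    have := hker s hs
    simp only [hf, hψ1, mul_one]
    exact this
  have hiπ : (0:ℝ) < 1 / (2 * Real.pi) := by positivity
  rw [poissonExt]
  apply mul_le_mul_of_nonneg_left _ hiπ.le
  rw [hsplit]
  linarith

lemma poissonK_lower_main {η δ t : ℝ} (hη1 : η < 1) (hδ0 : 0 < δ) (hδη : δ ≤ η)
    (ht : |t| ≤ η) {s : ℝ} (hs : s ∈ Set.Icc (-(δ/8)) (δ/8)) :
    (64/145) / η ≤ poissonK (1 - η) (t - s) := by
  have hη0 : 0 < η := lt_of_lt_of_le hδ0 hδη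
  have hr0 : 0 < 1 - η := by linarith
  have hr1 : 1 - η < 1 := by linarith
  have hD := denom_pos' hr0 hr1 (t - s)
  rw [abs_le] at ht
  obtain ⟨hs1, hs2⟩ := hs
  have hx1 : t - s ≤ 9 * η / 8 := by linarith
  have hx2 : -(9 * η / 8) ≤ t - s := by linarith
  have hxsq : (t - s) ^ 2 ≤ 81 * η ^ 2 / 64 := by nlinarith
  have hcos : 1 - (t - s) ^ 2 / 2 ≤ Real.cos (t - s) := Real.one_sub_sq_div_two_le_cos
  have hcos1 : Real.cos (t - s) ≤ 1 := Real.cos_le_one _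
  have hDle : 1 - 2 * (1 - η) * Real.cos (t - s) + (1 - η) ^ 2 ≤ 145 * η ^ 2 / 64 := by
    nlinarith
  rw [poissonK, div_le_div_iff₀ hη0 hD]
  nlinarith

lemma poissonK_lower_far (x : ℝ) : (1/3 : ℝ) ≤ poissonK (1/2) x := by
  have hD := denom_pos' (by norm_num : (0:ℝ) < 1/2) (by norm_num) x
  rw [poissonK, le_div_iff₀ hD]
  nlinarith [Real.neg_one_le_cos x]

lemma ext_cont_r {ψ : ℝ → ℝ} (hψc : Continuous ψ) (δ t : ℝ) :
    Continuous fun r : ↥(Set.Ioo (0:ℝ) 1) => poissonExt ψ δ (r : ℝ) t := by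
  unfold poissonExt
  apply continuous_const.mul
  apply intervalIntegral.continuous_parametric_intervalIntegral_of_continuous'
  have : Continuous fun p : ↥(Set.Ioo (0:ℝ) 1) × ℝ =>
      poissonK (p.1 : ℝ) (t - p.2) * ψ (p.2 / δ) := by
    apply Continuous.mul
    · unfold poissonK
      apply Continuous.div (by fun_prop) (by fun_prop)
      intro p
      exact (denom_pos' p.1.2.1 p.1.2.2 _).ne'
    · fun_prop
  exact this

lemma ext_cont_t {ψ : ℝ → ℝ} (hψc : Continuous ψ) (δ : ℝ)
    {r : ℝ} (hr0 : 0 < r) (hr1 : r < 1) :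
    Continuous fun t => poissonExt ψ δ r t := by
  unfold poissonExt
  apply continuous_const.mul
  apply intervalIntegral.continuous_parametric_intervalIntegral_of_continuous'
  have : Continuous fun p : ℝ × ℝ => poissonK r (p.1 - p.2) * ψ (p.2 / δ) := by
    apply Continuous.mul
    · unfold poissonK
      apply Continuous.div (by fun_prop) (by fun_prop)
      intro p
      exact (denom_pos' hr0 hr1 _).ne'
    · fun_prop
  exact this

set_option maxHeartbeats 1000000 in
/-- There are absolute constants `c, c' > 0` such that: for every smooth even
bump `ψ` with `ψ = 1` on `(-1/4,1/4)`, `ψ = 0` off `(-1/2,1/2)`, `0 ≤ ψ ≤ 1`,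
and every `δ ∈ (0,1)`, the radial maximal function `Mu(e^{it}) = sup_{0<r<1} u(re^{it})`
of the Poisson extension `u` of `t ↦ ψ(t/δ)` satisfies
`Mu(e^{it}) ≥ c·min(1, δ/|t|)` on `[-π,π)`, and `(1/2π)∫ Mu ≥ c' δ log(1/δ)`. -/
theorem stmt15 :
    ∃ c > (0:ℝ), ∃ c' > (0:ℝ), ∀ ψ : ℝ → ℝ, ContDiff ℝ (⊤ : ℕ∞) ψ →
      (∀ s, ψ (-s) = ψ s) →
      (∀ s ∈ Set.Ioo (-(1/4) : ℝ) (1/4), ψ s = 1) →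
      (∀ s : ℝ, (1/2 : ℝ) ≤ |s| → ψ s = 0) →
      (∀ s, 0 ≤ ψ s ∧ ψ s ≤ 1) →
      ∀ δ : ℝ, δ ∈ Set.Ioo (0:ℝ) 1 →
        (∀ t ∈ Set.Ico (-Real.pi) Real.pi,
          c * min 1 (δ / |t|) ≤ ⨆ r : Set.Ioo (0:ℝ) 1, poissonExt ψ δ (r : ℝ) t) ∧
        c' * δ * Real.log (1 / δ) ≤
          (1 / (2 * Real.pi)) * ∫ t in (-Real.pi)..Real.pi,
            ⨆ r : Set.Ioo (0:ℝ) 1, poissonExt ψ δ (r : ℝ) t := by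
  have hπ := Real.pi_gt_three
  have hπ0 : (0:ℝ) < Real.pi := by linarith
  refine ⟨(48 * Real.pi)⁻¹, by positivity, (96 * Real.pi ^ 2)⁻¹, by positivity, ?_⟩
  intro ψ hψ _heven hone hsupp hb δ hδ
  obtain ⟨hδ0, hδ1⟩ := hδ
  have hψc : Continuous ψ := hψ.continuous
  haveI hne : Nonempty ↥(Set.Ioo (0:ℝ) 1) := ⟨⟨1/2, by norm_num⟩⟩
  set c : ℝ := (48 * Real.pi)⁻¹ with hc
  have hc0 : 0 < c := by positivity
  set Mu : ℝ → ℝ := fun t => ⨆ r : Set.Ioo (0:ℝ) 1, poissonExt ψ δ (r : ℝ) t with hMu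
  set M : ℝ := (1 / (2 * Real.pi)) * (3 + Real.pi ^ 3) with hM
  have hbdd : ∀ t ∈ Set.Icc (-Real.pi) Real.pi,
      BddAbove (Set.range fun r : ↥(Set.Ioo (0:ℝ) 1) => poissonExt ψ δ (r : ℝ) t) := by
    intro t ht
    refine ⟨M, ?_⟩
    rintro x ⟨r, rfl⟩
    exact ext_upper hψc hsupp hb hδ0 hδ1 r.2.1 r.2.2 ht
  have hext_nonneg : ∀ (t : ℝ) (r : ℝ), 0 < r → r < 1 → 0 ≤ poissonExt ψ δ r t := by
    intro t r hr0 hr1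
    apply mul_nonneg (by positivity)
    apply intervalIntegral.integral_nonneg (by linarith)
    intro s _
    exact mul_nonneg (poissonK_nonneg' hr0 hr1 _) (hb _).1
  have hMu_nonneg : ∀ t ∈ Set.Icc (-Real.pi) Real.pi, 0 ≤ Mu t := by
    intro t ht
    refine le_trans (hext_nonneg t (1/2) (by norm_num) (by norm_num)) ?_
    exact le_ciSup (hbdd t ht) ⟨1/2, by norm_num⟩
  have hMu_le : ∀ t ∈ Set.Icc (-Real.pi) Real.pi, Mu t ≤ M := by
    intro t ht
    exact ciSup_le fun r => ext_upper hψc hsupp hb hδ0 hδ1 r.2.1 r.2.2 ht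
  -- pointwise lower bound
  have hpt : ∀ t ∈ Set.Ico (-Real.pi) Real.pi, c * min 1 (δ / |t|) ≤ Mu t := by
    intro t ht
    obtain ⟨ht1, ht2⟩ := ht
    have htIcc : t ∈ Set.Icc (-Real.pi) Real.pi := ⟨ht1, ht2.le⟩
    rcases le_or_gt |t| δ with hA | hA
    · -- case A: |t| ≤ δ, take r = 1 - δ
      have hr : (1 - δ) ∈ Set.Ioo (0:ℝ) 1 := ⟨by linarith, by linarith⟩
      have hker : ∀ s ∈ Set.Icc (-(δ/8)) (δ/8), (64/145) / δ ≤ poissonK (1 - δ) (t - s) :=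
        fun s hs => poissonK_lower_main hδ1 hδ0 le_rfl hA hs
      have hlow := ext_lower hψc hone hb hδ0 hδ1 hr.1 hr.2 hker
      have hconst : c * min 1 (δ / |t|) ≤ (1 / (2 * Real.pi)) * ((64/145) / δ * (δ / 4)) := by
        have h2 : (64/145) / δ * (δ / 4) = 16 / 145 := by
          field_simp; ring
        rw [h2]
        have h3 : (1 / (2 * Real.pi)) * (16 / 145) = 8 / (145 * Real.pi) := by ring
        calc c * min 1 (δ / |t|) ≤ c * 1 :=
              mul_le_mul_of_nonneg_left (min_le_left _ _) hc0.le
          _ ≤ (1 / (2 * Real.pi)) * (16 / 145) := by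
              rw [hc, mul_one, h3, inv_eq_one_div,
                div_le_div_iff₀ (by positivity) (by positivity)]
              nlinarith
      calc c * min 1 (δ / |t|) ≤ poissonExt ψ δ (1 - δ) t := le_trans hconst hlow
        _ ≤ Mu t := le_ciSup (hbdd t htIcc) ⟨1 - δ, hr⟩
    · rcases le_or_gt |t| (1/2) with hB | hB
      · -- case B: δ < |t| ≤ 1/2, take r = 1 - |t|
        have ht0 : 0 < |t| := lt_trans hδ0 hA
        have hr : (1 - |t|) ∈ Set.Ioo (0:ℝ) 1 := ⟨by linarith, by linarith⟩
        have hker : ∀ s ∈ Set.Icc (-(δ/8)) (δ/8),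
            (64/145) / |t| ≤ poissonK (1 - |t|) (t - s) :=
          fun s hs => poissonK_lower_main (by linarith) hδ0 hA.le le_rfl hs
        have hlow := ext_lower hψc hone hb hδ0 hδ1 hr.1 hr.2 hker
        have hconst : c * min 1 (δ / |t|)
            ≤ (1 / (2 * Real.pi)) * ((64/145) / |t| * (δ / 4)) := by
          have h2 : (1 / (2 * Real.pi)) * ((64/145) / |t| * (δ / 4))
              = (8 / (145 * Real.pi)) * (δ / |t|) := by
            field_simp
            ring
          rw [h2]
          calc c * min 1 (δ / |t|) ≤ c * (δ / |t|) :=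
                mul_le_mul_of_nonneg_left (min_le_right _ _) hc0.le
            _ ≤ (8 / (145 * Real.pi)) * (δ / |t|) := by
                apply mul_le_mul_of_nonneg_right _ (by positivity)
                rw [hc, inv_eq_one_div,
                  div_le_div_iff₀ (by positivity) (by positivity)]
                nlinarith
        calc c * min 1 (δ / |t|) ≤ poissonExt ψ δ (1 - |t|) t := le_trans hconst hlow
          _ ≤ Mu t := le_ciSup (hbdd t htIcc) ⟨1 - |t|, hr⟩
      · -- case C: |t| > 1/2, take r = 1/2
        have hr : (1/2 : ℝ) ∈ Set.Ioo (0:ℝ) 1 := by norm_num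
        have hker : ∀ s ∈ Set.Icc (-(δ/8)) (δ/8), (1/3:ℝ) ≤ poissonK (1/2) (t - s) :=
          fun s _ => poissonK_lower_far _
        have hlow := ext_lower hψc hone hb hδ0 hδ1 hr.1 hr.2 hker
        have hconst : c * min 1 (δ / |t|) ≤ (1 / (2 * Real.pi)) * ((1/3) * (δ / 4)) := by
          have hdt : δ / |t| ≤ 2 * δ := by
            rw [div_le_iff₀ (by linarith : (0:ℝ) < |t|)]
            nlinarith
          have h2 : (1 / (2 * Real.pi)) * ((1/3) * (δ / 4)) = δ / (24 * Real.pi) := by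
            rw [div_mul_div_comm, div_mul_div_comm, div_eq_div_iff (by positivity) (by positivity)]
            ring
          rw [h2]
          calc c * min 1 (δ / |t|) ≤ c * (δ / |t|) :=
                mul_le_mul_of_nonneg_left (min_le_right _ _) hc0.le
            _ ≤ c * (2 * δ) := mul_le_mul_of_nonneg_left hdt hc0.le
            _ = δ / (24 * Real.pi) := by
                rw [hc]
                field_simp
                ring
        calc c * min 1 (δ / |t|) ≤ poissonExt ψ δ (1/2) t := le_trans hconst hlow
          _ ≤ Mu t := le_ciSup (hbdd t htIcc) ⟨1/2, hr⟩
  refine ⟨hpt, ?_⟩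
  -- measurability via rational supremum
  haveI hneQ : Nonempty {q : ℚ // (q : ℝ) ∈ Set.Ioo (0:ℝ) 1} :=
    ⟨⟨1/2, by norm_num⟩⟩
  set Nu : ℝ → ℝ := fun t => ⨆ q : {q : ℚ // (q : ℝ) ∈ Set.Ioo (0:ℝ) 1},
    poissonExt ψ δ (q : ℝ) t with hNu
  have hbddQ : ∀ t ∈ Set.Icc (-Real.pi) Real.pi,
      BddAbove (Set.range fun q : {q : ℚ // (q : ℝ) ∈ Set.Ioo (0:ℝ) 1} =>
        poissonExt ψ δ (q : ℝ) t) := by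
    intro t ht
    refine ⟨M, ?_⟩
    rintro x ⟨q, rfl⟩
    exact ext_upper hψc hsupp hb hδ0 hδ1 q.2.1 q.2.2 ht
  have heq : ∀ t ∈ Set.Icc (-Real.pi) Real.pi, Mu t = Nu t := by
    intro t ht
    apply le_antisymm
    · apply ciSup_le
      rintro ⟨r, hr0, hr1⟩
      -- approximate r from below by rationals
      have hex : ∀ n : ℕ, ∃ q : ℚ, r - min (r/2) (1/(n+1)) < (q:ℝ) ∧ (q:ℝ) < r := by
        intro n
        have : r - min (r/2) (1/(n+1)) < r := by
          have : (0:ℝ) < min (r/2) (1/(n+1)) :=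
            lt_min (by linarith) (by positivity)
          linarith
        obtain ⟨q, hq1, hq2⟩ := exists_rat_btwn this
        exact ⟨q, hq1, hq2⟩
      choose q hq1 hq2 using hex
      have hqmem : ∀ n, ((q n : ℝ)) ∈ Set.Ioo (0:ℝ) 1 := by
        intro n
        constructor
        · have := hq1 n
          have hmin : min (r/2) (1/((n:ℝ)+1)) ≤ r/2 := min_le_left _ _
          linarith
        · linarith [hq2 n]
      have htendval : Filter.Tendsto (fun n => ((q n : ℝ))) Filter.atTop (nhds r) := by
        apply tendsto_of_tendsto_of_tendsto_of_le_of_le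
          (g := fun n : ℕ => r - 1/((n:ℝ)+1)) (h := fun _ : ℕ => r)
        · have h0 : Filter.Tendsto (fun n : ℕ => 1/((n:ℝ)+1)) Filter.atTop (nhds 0) :=
            tendsto_one_div_add_atTop_nhds_zero_nat
          have := (tendsto_const_nhds (x := r) (f := Filter.atTop (α := ℕ))).sub h0
          simpa using this
        · exact tendsto_const_nhds
        · intro n
          have hmin : min (r/2) (1/((n:ℝ)+1)) ≤ 1/((n:ℝ)+1) := min_le_right _ _
          linarith [hq1 n]
        · intro n
          exact (hq2 n).le
      have htend : Filter.Tendsto (fun n => (⟨(q n : ℝ), hqmem n⟩ : ↥(Set.Ioo (0:ℝ) 1)))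
          Filter.atTop (nhds ⟨r, hr0, hr1⟩) := by
        rw [tendsto_subtype_rng]
        exact htendval
      have hcont := (ext_cont_r hψc δ t).tendsto (⟨r, hr0, hr1⟩ : ↥(Set.Ioo (0:ℝ) 1))
      apply le_of_tendsto (hcont.comp htend)
      filter_upwards with n
      show poissonExt ψ δ ((q n : ℝ)) t ≤ Nu t
      exact le_ciSup (hbddQ t ht) ⟨q n, hqmem n⟩
    · apply ciSup_le
      intro qq
      exact le_ciSup (hbdd t ht) ⟨(qq : ℝ), qq.2⟩
  have hNu_meas : Measurable Nu := by
    apply Measurable.iSup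
    intro q
    exact (ext_cont_t hψc δ q.2.1 q.2.2).measurable
  have hNu_int : IntegrableOn Nu (Set.Ioc (-Real.pi) Real.pi) volume := by
    have hfin : volume (Set.Ioc (-Real.pi) Real.pi) < ⊤ := measure_Ioc_lt_top
    apply Integrable.mono' (g := fun _ => M)
      (integrableOn_const hfin.ne)
      hNu_meas.aestronglyMeasurable.restrict
    rw [ae_restrict_iff' measurableSet_Ioc]
    apply ae_of_all
    intro t ht
    have htIcc : t ∈ Set.Icc (-Real.pi) Real.pi := ⟨ht.1.le, ht.2⟩
    rw [Real.norm_eq_abs, abs_of_nonneg]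
    · rw [← heq t htIcc]
      exact hMu_le t htIcc
    · rw [← heq t htIcc]
      exact hMu_nonneg t htIcc
  have hMu_int : IntervalIntegrable Mu volume (-Real.pi) Real.pi := by
    rw [intervalIntegrable_iff_integrableOn_Ioc_of_le (by linarith)]
    exact hNu_int.congr_fun (fun t ht => (heq t ⟨ht.1.le, ht.2⟩).symm) measurableSet_Ioc
  -- split the integral
  have hsub1 : Set.uIcc δ (1:ℝ) ⊆ Set.uIcc (-Real.pi) Real.pi := by
    rw [Set.uIcc_of_le hδ1.le, Set.uIcc_of_le (by linarith)]
    intro x hx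
    exact ⟨by linarith [hx.1], by linarith [hx.2]⟩
  have hint1 : IntervalIntegrable Mu volume (-Real.pi) δ :=
    hMu_int.mono_set (by
      rw [Set.uIcc_of_le (by linarith), Set.uIcc_of_le (by linarith)]
      intro x hx
      exact ⟨hx.1, by linarith [hx.2]⟩)
  have hint2 : IntervalIntegrable Mu volume δ 1 :=
    hMu_int.mono_set hsub1
  have hint3 : IntervalIntegrable Mu volume 1 Real.pi :=
    hMu_int.mono_set (by
      rw [Set.uIcc_of_le (by linarith), Set.uIcc_of_le (by linarith)]
      intro x hx
      exact ⟨by linarith [hx.1], hx.2⟩)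
  have hsplit : (∫ t in (-Real.pi)..Real.pi, Mu t)
      = (∫ t in (-Real.pi)..δ, Mu t) + ((∫ t in δ..(1:ℝ), Mu t)
        + (∫ t in (1:ℝ)..Real.pi, Mu t)) := by
    rw [integral_add_adjacent_intervals hint2 hint3,
      integral_add_adjacent_intervals hint1 (hint2.trans hint3)]
  have hpos1 : 0 ≤ ∫ t in (-Real.pi)..δ, Mu t := by
    apply intervalIntegral.integral_nonneg (by linarith)
    intro t ht
    exact hMu_nonneg t ⟨ht.1, by linarith [ht.2]⟩
  have hpos3 : 0 ≤ ∫ t in (1:ℝ)..Real.pi, Mu t := by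
    apply intervalIntegral.integral_nonneg (by linarith)
    intro t ht
    exact hMu_nonneg t ⟨by linarith [ht.1], ht.2⟩
  have hmid : c * δ * Real.log (1 / δ) ≤ ∫ t in δ..(1:ℝ), Mu t := by
    have hlog : (∫ t in δ..(1:ℝ), (c * δ) * (1 / t)) = c * δ * Real.log (1 / δ) := by
      rw [intervalIntegral.integral_const_mul, integral_one_div]
      intro h
      rw [Set.uIcc_of_le hδ1.le] at h
      exact absurd h.1 (by linarith)
    rw [← hlog]
    apply intervalIntegral.integral_mono_on hδ1.le _ hint2
    · intro t ht
      obtain ⟨htl, htr⟩ := ht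
      have ht0 : 0 < t := lt_of_lt_of_le hδ0 htl
      have habs : |t| = t := abs_of_pos ht0
      have hmin : min 1 (δ / |t|) = δ / t := by
        rw [habs, min_eq_right]
        rw [div_le_one ht0]
        exact htl
      have := hpt t ⟨by linarith, by linarith⟩
      rw [hmin] at this
      calc (c * δ) * (1 / t) = c * (δ / t) := by ring
        _ ≤ Mu t := this
    · apply ContinuousOn.intervalIntegrable
      apply ContinuousOn.mul continuousOn_const
      apply ContinuousOn.div continuousOn_const continuousOn_id
      intro x hx
      rw [Set.uIcc_of_le hδ1.le] at hx
      exact ne_of_gt (lt_of_lt_of_le hδ0 hx.1)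
  have hInt : c * δ * Real.log (1 / δ) ≤ ∫ t in (-Real.pi)..Real.pi, Mu t := by
    rw [hsplit]
    linarith
  have hfinal := mul_le_mul_of_nonneg_left hInt
    (by positivity : (0:ℝ) ≤ 1 / (2 * Real.pi))
  calc (96 * Real.pi ^ 2)⁻¹ * δ * Real.log (1 / δ)
      = 1 / (2 * Real.pi) * (c * δ * Real.log (1 / δ)) := by
        have hAB : (1:ℝ) / (2 * Real.pi) * (48 * Real.pi)⁻¹ = (96 * Real.pi ^ 2)⁻¹ := by
          rw [one_div, ← mul_inv]
          congr 1
          ring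
        rw [hc, ← hAB]
        ring
    _ ≤ 1 / (2 * Real.pi) * ∫ t in (-Real.pi)..Real.pi, Mu t := hfinal

end
end
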